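/- Let K be a field, A a K-algebra equipped with augmentations (K-algebra homomorphisms) ρ_1, …, ρ_n : A → K, and B ⊆ A a subalgebra with 1_B = 1_A. Write B_i^+ = ker(ρ_i) ∩ B. If B ⊆ A has right depth 2, then A·B_i^+ ⊆ B_i^+·A for each i = 1, …, n; if B ⊆ A has left depth 2, then B_i^+·A ⊆ A·B_i^+ for each i = 1, …, n. -/

import Mathlib

/-! # Depth of subring extensions (Kadison–Young)
For a unital subring `B ⊆ A`, `CC B n` realizes the `n`-fold relative tensor power
`C_n(A,B) = A ⊗_B ⋯ ⊗_B A` (with `C_0(A,B) = B`) as a quotient of the iterated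
tensor power over `ℤ` by the middle `B`-balancing relations, together with its
natural left/right `A`- and `B`-actions.  Bimodule maps, the divisibility relation
`M ∣ q ⬝ N`, H-equivalence, the depth conditions and the minimum depth `d(B,A) ∈ ℕ∞`
are then defined exactly as in the paper. -/

open TensorProduct

universe u

variable (A : Type u) [Ring A]

/-- `Tpow A n` is the `(n+1)`-fold tensor power `A ⊗ℤ ⋯ ⊗ℤ A`. -/
noncomputable def Tpow : ℕ → ModuleCat.{u} ℤ
  | 0 => ModuleCat.of ℤ A
  | n + 1 => ModuleCat.of ℤ (A ⊗[ℤ] (Tpow n : Type u))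

/-- Multiplication by `a : A` on the leftmost tensor factor. -/
noncomputable def lmulT (a : A) : ∀ n, (Tpow A n : Type u) →ₗ[ℤ] (Tpow A n : Type u)
  | 0 => (LinearMap.mulLeft ℤ a : A →ₗ[ℤ] A)
  | n + 1 => LinearMap.rTensor (Tpow A n : Type u) (LinearMap.mulLeft ℤ a)

/-- Multiplication by `a : A` on the rightmost tensor factor. -/
noncomputable def rmulT (a : A) : ∀ n, (Tpow A n : Type u) →ₗ[ℤ] (Tpow A n : Type u)
  | 0 => (LinearMap.mulRight ℤ a : A →ₗ[ℤ] A)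
  | n + 1 => LinearMap.lTensor A (rmulT a n)

private theorem lmulT_succ_apply (a : A) (n : ℕ) (x : A ⊗[ℤ] (Tpow A n : Type u)) :
    lmulT A a (n+1) x = LinearMap.rTensor (Tpow A n : Type u) (LinearMap.mulLeft ℤ a) x := rfl

private theorem rmulT_succ_apply (a : A) (n : ℕ) (x : A ⊗[ℤ] (Tpow A n : Type u)) :
    rmulT A a (n+1) x = LinearMap.lTensor A (rmulT A a n) x := rfl

private theorem auxcomm (M : Type u) [AddCommGroup M] [Module ℤ M] (a : A) (g : M →ₗ[ℤ] M)
    (x : A ⊗[ℤ] M) :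
    (LinearMap.rTensor M (LinearMap.mulLeft ℤ a)) ((LinearMap.lTensor A g) x) =
    (LinearMap.lTensor A g) ((LinearMap.rTensor M (LinearMap.mulLeft ℤ a)) x) := by
  induction x using TensorProduct.induction_on with
  | zero => simp
  | tmul c t => simp
  | add y z hy hz => simp only [map_add, hy, hz]

theorem lmulT_rmulT_comm (a b : A) : ∀ (n : ℕ) (x : (Tpow A n : Type u)),
    lmulT A a n (rmulT A b n x) = rmulT A b n (lmulT A a n x)
  | 0, x => (mul_assoc a x b).symm
  | n + 1, x => by
    show (lmulT A a (n+1)) ((rmulT A b (n+1)) x) = (rmulT A b (n+1)) ((lmulT A a (n+1)) x)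
    rw [lmulT, rmulT]
    exact auxcomm A (Tpow A n : Type u) a (rmulT A b n) x

private theorem aux1 (M : Type u) [AddCommGroup M] [Module ℤ M] (a c d : A) (t s : M) :
    LinearMap.rTensor M (LinearMap.mulLeft ℤ a) (c ⊗ₜ[ℤ] t - d ⊗ₜ[ℤ] s) =
      (a * c) ⊗ₜ[ℤ] t - (a * d) ⊗ₜ[ℤ] s := by simp

private theorem aux2 (M : Type u) [AddCommGroup M] [Module ℤ M] (g : M →ₗ[ℤ] M) (c d : A)
    (t s : M) :
    LinearMap.lTensor A g (c ⊗ₜ[ℤ] t - d ⊗ₜ[ℤ] s) = c ⊗ₜ[ℤ] (g t) - d ⊗ₜ[ℤ] (g s) := by simp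

private theorem aux3 (M : Type u) [AddCommGroup M] [Module ℤ M] (a c : A) (t : M) :
    LinearMap.rTensor M (LinearMap.mulLeft ℤ a) (c ⊗ₜ[ℤ] t) = (a * c) ⊗ₜ[ℤ] t := by simp

private theorem aux4 (M : Type u) [AddCommGroup M] [Module ℤ M] (g : M →ₗ[ℤ] M) (c : A) (t : M) :
    LinearMap.lTensor A g (c ⊗ₜ[ℤ] t) = c ⊗ₜ[ℤ] (g t) := by simp


variable {A}

/-- The `B`-balancing relations inside `Tpow A n`. -/
noncomputable def rel (B : Subring A) : ∀ n, Submodule ℤ (Tpow A n : Type u)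
  | 0 => ⊥
  | n + 1 =>
      Submodule.span ℤ
        {x : (Tpow A (n+1) : Type u) |
          (∃ (a : A) (b : B) (t : (Tpow A n : Type u)),
            x = ((a * (b : A)) ⊗ₜ[ℤ] t : A ⊗[ℤ] (Tpow A n : Type u)) -
                 a ⊗ₜ[ℤ] (lmulT A (b : A) n t)) ∨
          (∃ (a : A) (r : (Tpow A n : Type u)), r ∈ rel B n ∧
            x = (a ⊗ₜ[ℤ] r : A ⊗[ℤ] (Tpow A n : Type u)))}

theorem rel_succ (B : Subring A) (n : ℕ) :
    rel B (n+1) =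
      Submodule.span ℤ
        {x : (Tpow A (n+1) : Type u) |
          (∃ (a : A) (b : B) (t : (Tpow A n : Type u)),
            x = ((a * (b : A)) ⊗ₜ[ℤ] t : A ⊗[ℤ] (Tpow A n : Type u)) -
                 a ⊗ₜ[ℤ] (lmulT A (b : A) n t)) ∨
          (∃ (a : A) (r : (Tpow A n : Type u)), r ∈ rel B n ∧
            x = (a ⊗ₜ[ℤ] r : A ⊗[ℤ] (Tpow A n : Type u)))} := rfl

theorem rel_le_comap_lmulT (B : Subring A) (a : A) :
    ∀ n, rel B n ≤ (rel B n).comap (lmulT A a n)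
  | 0 => bot_le
  | n + 1 => by
    rw [rel_succ, Submodule.span_le]
    rintro x (⟨a', b, t, hx⟩ | ⟨a', r, hr, hx⟩) <;>
      show lmulT A a (n+1) x ∈ rel B (n+1) <;> subst hx <;> rw [lmulT_succ_apply]
    · rw [map_sub, LinearMap.rTensor_tmul, LinearMap.rTensor_tmul, LinearMap.mulLeft_apply,
        LinearMap.mulLeft_apply]
      refine Submodule.subset_span (Or.inl ⟨a * a', b, t, ?_⟩)
      rw [mul_assoc]
    · rw [LinearMap.rTensor_tmul, LinearMap.mulLeft_apply]
      exact Submodule.subset_span (Or.inr ⟨a * a', r, hr, rfl⟩)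

theorem rel_le_comap_rmulT (B : Subring A) (a : A) :
    ∀ n, rel B n ≤ (rel B n).comap (rmulT A a n)
  | 0 => bot_le
  | n + 1 => by
    rw [rel_succ, Submodule.span_le]
    rintro x (⟨a', b, t, hx⟩ | ⟨a', r, hr, hx⟩) <;>
      show rmulT A a (n+1) x ∈ rel B (n+1) <;> subst hx <;> rw [rmulT_succ_apply]
    · rw [map_sub, LinearMap.lTensor_tmul, LinearMap.lTensor_tmul, ← lmulT_rmulT_comm]
      exact Submodule.subset_span (Or.inl ⟨a', b, rmulT A a n t, rfl⟩)
    · rw [LinearMap.lTensor_tmul]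
      exact Submodule.subset_span
        (Or.inr ⟨a', rmulT A a n r, rel_le_comap_rmulT B a n hr, rfl⟩)

/-- `CC B n` is `C_n(A,B) = A ⊗_B ⋯ ⊗_B A` (`n` factors of `A`), with `CC B 0 = B`. -/
noncomputable def CC (B : Subring A) : ℕ → ModuleCat.{u} ℤ
  | 0 => ModuleCat.of ℤ B
  | n + 1 => ModuleCat.of ℤ ((Tpow A n : Type u) ⧸ rel B n)

/-- The left `A`-action on `C_{n+1}(A,B)`. -/
noncomputable def lA (B : Subring A) (a : A) (n : ℕ) :
    (CC B (n+1) : Type u) →ₗ[ℤ] (CC B (n+1) : Type u) :=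
  show ((Tpow A n : Type u) ⧸ rel B n) →ₗ[ℤ] ((Tpow A n : Type u) ⧸ rel B n) from
    Submodule.mapQ _ _ (lmulT A a n) (rel_le_comap_lmulT B a n)

/-- The right `A`-action on `C_{n+1}(A,B)`. -/
noncomputable def rA (B : Subring A) (a : A) (n : ℕ) :
    (CC B (n+1) : Type u) →ₗ[ℤ] (CC B (n+1) : Type u) :=
  show ((Tpow A n : Type u) ⧸ rel B n) →ₗ[ℤ] ((Tpow A n : Type u) ⧸ rel B n) from
    Submodule.mapQ _ _ (rmulT A a n) (rel_le_comap_rmulT B a n)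

/-- The left `B`-action on `C_n(A,B)`. -/
noncomputable def lB (B : Subring A) (b : B) : ∀ n, (CC B n : Type u) →ₗ[ℤ] (CC B n : Type u)
  | 0 => (LinearMap.mulLeft ℤ b : B →ₗ[ℤ] B)
  | n + 1 => lA B (b : A) n

/-- The right `B`-action on `C_n(A,B)`. -/
noncomputable def rB (B : Subring A) (b : B) : ∀ n, (CC B n : Type u) →ₗ[ℤ] (CC B n : Type u)
  | 0 => (LinearMap.mulRight ℤ b : B →ₗ[ℤ] B)
  | n + 1 => rA B (b : A) n

/-- `f` is a morphism of `B`-`B`-bimodules `C_m(A,B) → C_n(A,B)`. -/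
def IsBBHom (B : Subring A) {m n : ℕ} (f : (CC B m : Type u) →ₗ[ℤ] (CC B n : Type u)) : Prop :=
  ∀ b : B, (∀ x, f (lB B b m x) = lB B b n (f x)) ∧ (∀ x, f (rB B b m x) = rB B b n (f x))

/-- `f` is a morphism of `A`-`B`-bimodules `C_{m+1}(A,B) → C_{n+1}(A,B)`. -/
def IsABHom (B : Subring A) {m n : ℕ}
    (f : (CC B (m+1) : Type u) →ₗ[ℤ] (CC B (n+1) : Type u)) : Prop :=
  (∀ (a : A) x, f (lA B a m x) = lA B a n (f x)) ∧
  (∀ (b : B) x, f (rB B b (m+1) x) = rB B b (n+1) (f x))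

/-- `f` is a morphism of `B`-`A`-bimodules `C_{m+1}(A,B) → C_{n+1}(A,B)`. -/
def IsBAHom (B : Subring A) {m n : ℕ}
    (f : (CC B (m+1) : Type u) →ₗ[ℤ] (CC B (n+1) : Type u)) : Prop :=
  (∀ (b : B) x, f (lB B b (m+1) x) = lB B b (n+1) (f x)) ∧
  (∀ (a : A) x, f (rA B a m x) = rA B a n (f x))

/-- `C_m(A,B)` divides a multiple of `C_n(A,B)` as `B`-`B`-bimodules. -/
def DividesBB (B : Subring A) (m n : ℕ) : Prop :=
  ∃ (r : ℕ) (f : Fin r → ((CC B m : Type u) →ₗ[ℤ] (CC B n : Type u)))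
    (g : Fin r → ((CC B n : Type u) →ₗ[ℤ] (CC B m : Type u))),
    (∀ i, IsBBHom B (f i)) ∧ (∀ i, IsBBHom B (g i)) ∧
      ∑ i, (g i).comp (f i) = LinearMap.id

/-- `C_{m+1}(A,B)` divides a multiple of `C_{n+1}(A,B)` as `A`-`B`-bimodules. -/
def DividesAB (B : Subring A) (m n : ℕ) : Prop :=
  ∃ (r : ℕ) (f : Fin r → ((CC B (m+1) : Type u) →ₗ[ℤ] (CC B (n+1) : Type u)))
    (g : Fin r → ((CC B (n+1) : Type u) →ₗ[ℤ] (CC B (m+1) : Type u))),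
    (∀ i, IsABHom B (f i)) ∧ (∀ i, IsABHom B (g i)) ∧
      ∑ i, (g i).comp (f i) = LinearMap.id

/-- `C_{m+1}(A,B)` divides a multiple of `C_{n+1}(A,B)` as `B`-`A`-bimodules. -/
def DividesBA (B : Subring A) (m n : ℕ) : Prop :=
  ∃ (r : ℕ) (f : Fin r → ((CC B (m+1) : Type u) →ₗ[ℤ] (CC B (n+1) : Type u)))
    (g : Fin r → ((CC B (n+1) : Type u) →ₗ[ℤ] (CC B (m+1) : Type u))),
    (∀ i, IsBAHom B (f i)) ∧ (∀ i, IsBAHom B (g i)) ∧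
      ∑ i, (g i).comp (f i) = LinearMap.id

/-- H-equivalence of `C_m` and `C_n` as `B`-`B`-bimodules. -/
def HequivBB (B : Subring A) (m n : ℕ) : Prop := DividesBB B m n ∧ DividesBB B n m

/-- H-equivalence of `C_{m+1}` and `C_{n+1}` as `A`-`B`-bimodules. -/
def HequivAB (B : Subring A) (m n : ℕ) : Prop := DividesAB B m n ∧ DividesAB B n m

/-- H-equivalence of `C_{m+1}` and `C_{n+1}` as `B`-`A`-bimodules. -/
def HequivBA (B : Subring A) (m n : ℕ) : Prop := DividesBA B m n ∧ DividesBA B n m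

/-- The extension `B ⊆ A` has depth `d`: depth `2n+1` (`n ≥ 0`) means
`C_{n+1} ∼ C_n` as `B`-`B`-bimodules, and right (resp. left) depth `2n` (`n ≥ 1`)
means `C_{n+1} ∼ C_n` as `A`-`B`- (resp. `B`-`A`-) bimodules. -/
def HasDepth (B : Subring A) (d : ℕ) : Prop :=
  (∃ n : ℕ, d = 2 * n + 1 ∧ HequivBB B (n+1) n) ∨
  (∃ n : ℕ, d = 2 * (n+1) ∧ (HequivAB B (n+1) n ∨ HequivBA B (n+1) n))

/-- The minimum depth `d(B,A) ∈ ℕ∞` of the subring extension `B ⊆ A`. -/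
noncomputable def depth (B : Subring A) : ℕ∞ :=
  sInf {d : ℕ∞ | ∃ m : ℕ, HasDepth B m ∧ d = (m : ℕ∞)}

/-! Under right depth 2, `A ⊗_B A ∣ r ⬝ A` as `A`-`B`-bimodules, via maps `f i : A ⊗_B A → A` and
`g i : A → A ⊗_B A`. The map `Φ : A ⊗_B A → A ⧸ B⁺A`, `a ⊗ t ↦ ρ(a) t`, is well defined because
`b t ≡ ρ(b) t` modulo `B⁺A`, and satisfies `Φ (d w) = ρ(d) Φ w`; hence `Φ (g i e) = ρ(e) Φ (g i 1)`.
For `b ∈ B⁺` the maps `f i` carry `1 ⊗ cb = (1 ⊗ c) b` to elements `d_i b` of `A`, so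
`[cb] = Φ (1 ⊗ cb) = ∑ ρ(d_i b) Φ (g i 1) = 0`, i.e. `cb ∈ B⁺A`. Left depth 2 is the mirror image. -/

section Span

variable {A : Type*} [Ring A] {S : Set A}

theorem span_subset_span_op_of_mul_mem (h : ∀ c, ∀ s ∈ S, c * s ∈ Submodule.span Aᵐᵒᵖ S) :
    (Submodule.span A S : Set A) ⊆ Submodule.span Aᵐᵒᵖ S := by
  intro x hx
  obtain ⟨m, c, s, rfl⟩ := Submodule.mem_span_set'.1 hx
  exact Submodule.sum_mem _ fun j _ => h (c j) (s j) (s j).2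

theorem span_op_subset_span_of_mul_mem (h : ∀ c, ∀ s ∈ S, s * c ∈ Submodule.span A S) :
    (Submodule.span Aᵐᵒᵖ S : Set A) ⊆ Submodule.span A S := by
  intro x hx
  obtain ⟨m, c, s, rfl⟩ := Submodule.mem_span_set'.1 hx
  exact Submodule.sum_mem _ fun j _ => h (c j).unop (s j) (s j).2

end Span

section RelativeTensor

variable {A : Type u} [Ring A] (B : Subring A)

noncomputable def toC1 : A →ₗ[ℤ] (CC B 1 : Type u) := (rel B 0).mkQ

noncomputable def toC2 : A ⊗[ℤ] A →ₗ[ℤ] (CC B 2 : Type u) := (rel B 1).mkQ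

theorem toC1_surjective : Function.Surjective (toC1 B) := (rel B 0).mkQ_surjective

theorem toC2_surjective : Function.Surjective (toC2 B) := (rel B 1).mkQ_surjective

theorem lA_toC1 (d e : A) : lA B d 0 (toC1 B e) = toC1 B (d * e) := rfl

theorem rA_toC1 (d e : A) : rA B d 0 (toC1 B e) = toC1 B (e * d) := rfl

theorem lA_toC2_tmul (d a t : A) : lA B d 1 (toC2 B (a ⊗ₜ t)) = toC2 B ((d * a) ⊗ₜ t) := rfl

theorem rA_toC2_tmul (d a t : A) : rA B d 1 (toC2 B (a ⊗ₜ t)) = toC2 B (a ⊗ₜ (t * d)) := rfl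

variable {B}

theorem rel_one_le_ker {M : Type*} [AddCommGroup M] (φ : A ⊗[ℤ] A →ₗ[ℤ] M)
    (hφ : ∀ (a t : A) (b : B), φ ((a * b) ⊗ₜ t) = φ (a ⊗ₜ (b * t))) :
    rel B 1 ≤ LinearMap.ker φ := by
  rw [rel_succ]
  refine Submodule.span_le.2 ?_
  rintro x (⟨a, b, (t : A), rfl⟩ | ⟨a, r, hr, rfl⟩)
  -- stated in `A ⊗[ℤ] A`, whose `ℤ`-module instance is not syntactically that of `Tpow A 1`
  · have : ((a * b) ⊗ₜ[ℤ] t - a ⊗ₜ[ℤ] (b * t) : A ⊗[ℤ] A) ∈ LinearMap.ker φ := by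
      rw [LinearMap.mem_ker, map_sub, hφ, sub_self]
    exact this
  · rw [(Submodule.mem_bot ℤ).1 hr, tmul_zero]
    exact zero_mem _

noncomputable def liftC2 {M : Type*} [AddCommGroup M] (φ : A ⊗[ℤ] A →ₗ[ℤ] M)
    (hφ : ∀ (a t : A) (b : B), φ ((a * b) ⊗ₜ t) = φ (a ⊗ₜ (b * t))) :
    (CC B 2 : Type u) →ₗ[ℤ] M :=
  (rel B 1).liftQ φ (rel_one_le_ker φ hφ)

variable {R Q : Type*} [Semiring R] [AddCommGroup Q] [Module R Q]

theorem map_rA_eq_zero_of_dividesAB (h : DividesAB B 1 0) (ρ : A →* R)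
    (Φ : (CC B 2 : Type u) →ₗ[ℤ] Q) (hΦ : ∀ d w, Φ (lA B d 1 w) = ρ d • Φ w)
    {b : A} (hb : b ∈ B) (hρb : ρ b = 0) (x : (CC B 2 : Type u)) :
    Φ (rA B b 1 x) = 0 := by
  obtain ⟨r, f, g, hf, hg, hsum⟩ := h
  have hg_toC1 (i : Fin r) (e : A) : Φ (g i (toC1 B e)) = ρ e • Φ (g i (toC1 B 1)) := by
    rw [← hΦ, ← (hg i).1, lA_toC1, mul_one]
  calc Φ (rA B b 1 x) = ∑ i, Φ (g i (f i (rA B b 1 x))) := by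
        rw [← map_sum]
        congr 1
        simpa using (LinearMap.congr_fun hsum (rA B b 1 x)).symm
    _ = 0 := Finset.sum_eq_zero fun i _ => by
        obtain ⟨d, hd⟩ := toC1_surjective B (f i x)
        have hfi : f i (rA B b 1 x) = rA B b 0 (f i x) := (hf i).2 ⟨b, hb⟩ x
        rw [hfi, ← hd, rA_toC1, hg_toC1, map_mul, hρb, mul_zero, zero_smul]

theorem map_lA_eq_zero_of_dividesBA (h : DividesBA B 1 0) (ρ : A →* R)
    (Φ : (CC B 2 : Type u) →ₗ[ℤ] Q) (hΦ : ∀ d w, Φ (rA B d 1 w) = ρ d • Φ w)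
    {b : A} (hb : b ∈ B) (hρb : ρ b = 0) (x : (CC B 2 : Type u)) :
    Φ (lA B b 1 x) = 0 := by
  obtain ⟨r, f, g, hf, hg, hsum⟩ := h
  have hg_toC1 (i : Fin r) (e : A) : Φ (g i (toC1 B e)) = ρ e • Φ (g i (toC1 B 1)) := by
    rw [← hΦ, ← (hg i).2, rA_toC1, one_mul]
  calc Φ (lA B b 1 x) = ∑ i, Φ (g i (f i (lA B b 1 x))) := by
        rw [← map_sum]
        congr 1
        simpa using (LinearMap.congr_fun hsum (lA B b 1 x)).symm
    _ = 0 := Finset.sum_eq_zero fun i _ => by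
        obtain ⟨d, hd⟩ := toC1_surjective B (f i x)
        have hfi : f i (lA B b 1 x) = lA B b 0 (f i x) := (hf i).1 ⟨b, hb⟩ x
        rw [hfi, ← hd, lA_toC1, hg_toC1, map_mul, hρb, zero_mul, zero_smul]

end RelativeTensor

section Augmentation

variable {K : Type*} [CommRing K] {A : Type u} [Ring A] [Algebra K A]
  (B : Subalgebra K A) (ρ : A →ₐ[K] K)

/-- The paper's `B⁺ = ker ρ ∩ B`. -/
def augKer : Set A := {x | x ∈ B ∧ ρ x = 0}

/-- The right ideal `B⁺·A`. -/
abbrev rightAugIdeal : Submodule Aᵐᵒᵖ A := Submodule.span Aᵐᵒᵖ (augKer B ρ)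

/-- The left ideal `A·B⁺`. -/
abbrev leftAugIdeal : Submodule A A := Submodule.span A (augKer B ρ)

theorem sub_smul_one_mem_augKer {b : A} (hb : b ∈ B) : b - ρ b • (1 : A) ∈ augKer B ρ :=
  ⟨sub_mem hb (B.smul_mem B.one_mem _), by simp⟩

theorem mk_mul_mod_rightAugIdeal {b : A} (hb : b ∈ B) (t : A) :
    (Submodule.Quotient.mk (b * t) : A ⧸ rightAugIdeal B ρ) = ρ b • Submodule.Quotient.mk t := by
  rw [← Submodule.Quotient.mk_smul, Submodule.Quotient.eq]
  have : b * t - ρ b • t = MulOpposite.op t • (b - ρ b • (1 : A)) := by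
    rw [op_smul_eq_mul, sub_mul, smul_mul_assoc, one_mul]
  rw [this]
  exact Submodule.smul_mem _ _ (Submodule.subset_span (sub_smul_one_mem_augKer B ρ hb))

theorem mk_mul_mod_leftAugIdeal {b : A} (hb : b ∈ B) (a : A) :
    (Submodule.Quotient.mk (a * b) : A ⧸ leftAugIdeal B ρ) = ρ b • Submodule.Quotient.mk a := by
  rw [← Submodule.Quotient.mk_smul, Submodule.Quotient.eq]
  have : a * b - ρ b • a = a • (b - ρ b • (1 : A)) := by
    rw [smul_eq_mul, mul_sub, mul_smul_comm, mul_one]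
  rw [this]
  exact Submodule.smul_mem _ _ (Submodule.subset_span (sub_smul_one_mem_augKer B ρ hb))

noncomputable def augmentLeft : (CC B.toSubring 2 : Type u) →ₗ[ℤ] A ⧸ rightAugIdeal B ρ :=
  liftC2
    (TensorProduct.lift (LinearMap.mk₂ ℤ (fun a t => ρ a • Submodule.Quotient.mk t)
      (fun a a' t => by rw [map_add, add_smul])
      (fun c a t => by rw [map_zsmul, smul_assoc])
      (fun a t t' => by rw [Submodule.Quotient.mk_add, smul_add])
      (fun c a t => by rw [Submodule.Quotient.mk_smul, smul_comm])))
    fun a t b => by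
      show ρ (a * b) • (Submodule.Quotient.mk t : A ⧸ rightAugIdeal B ρ) =
        ρ a • Submodule.Quotient.mk (b * t)
      rw [mk_mul_mod_rightAugIdeal B ρ b.2, map_mul, mul_smul]

noncomputable def augmentRight : (CC B.toSubring 2 : Type u) →ₗ[ℤ] A ⧸ leftAugIdeal B ρ :=
  liftC2
    (TensorProduct.lift (LinearMap.mk₂ ℤ (fun a t => ρ t • Submodule.Quotient.mk a)
      (fun a a' t => by rw [Submodule.Quotient.mk_add, smul_add])
      (fun c a t => by rw [Submodule.Quotient.mk_smul, smul_comm])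
      (fun a t t' => by rw [map_add, add_smul])
      (fun c a t => by rw [map_zsmul, smul_assoc])))
    fun a t b => by
      show ρ t • (Submodule.Quotient.mk (a * b) : A ⧸ leftAugIdeal B ρ) =
        ρ (b * t) • Submodule.Quotient.mk a
      rw [mk_mul_mod_leftAugIdeal B ρ b.2, map_mul, mul_comm, mul_smul]

theorem augmentLeft_toC2_tmul (a t : A) :
    augmentLeft B ρ (toC2 _ (a ⊗ₜ t)) = ρ a • Submodule.Quotient.mk t := rfl

theorem augmentRight_toC2_tmul (a t : A) :
    augmentRight B ρ (toC2 _ (a ⊗ₜ t)) = ρ t • Submodule.Quotient.mk a := rfl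

theorem augmentLeft_lA (d : A) (w : (CC B.toSubring 2 : Type u)) :
    augmentLeft B ρ (lA _ d 1 w) = ρ d • augmentLeft B ρ w := by
  obtain ⟨t, rfl⟩ := toC2_surjective _ w
  induction t using TensorProduct.induction_on with
  | zero => simp
  | tmul a t => rw [lA_toC2_tmul, augmentLeft_toC2_tmul, augmentLeft_toC2_tmul, map_mul, mul_smul]
  | add t t' ht ht' => simp only [map_add, ht, ht', smul_add]

theorem augmentRight_rA (d : A) (w : (CC B.toSubring 2 : Type u)) :
    augmentRight B ρ (rA _ d 1 w) = ρ d • augmentRight B ρ w := by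
  obtain ⟨t, rfl⟩ := toC2_surjective _ w
  induction t using TensorProduct.induction_on with
  | zero => simp
  | tmul a t =>
    rw [rA_toC2_tmul, augmentRight_toC2_tmul, augmentRight_toC2_tmul, map_mul, mul_comm, mul_smul]
  | add t t' ht ht' => simp only [map_add, ht, ht', smul_add]

variable {B ρ}

theorem mul_mem_rightAugIdeal_of_dividesAB (h : DividesAB B.toSubring 1 0) (c : A) {b : A}
    (hb : b ∈ augKer B ρ) : c * b ∈ rightAugIdeal B ρ := by
  have := map_rA_eq_zero_of_dividesAB h (ρ : A →* K) (augmentLeft B ρ) (augmentLeft_lA B ρ) hb.1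
    hb.2 (toC2 _ (1 ⊗ₜ c))
  rwa [rA_toC2_tmul, augmentLeft_toC2_tmul, map_one, one_smul,
    Submodule.Quotient.mk_eq_zero] at this

theorem mul_mem_leftAugIdeal_of_dividesBA (h : DividesBA B.toSubring 1 0) (c : A) {b : A}
    (hb : b ∈ augKer B ρ) : b * c ∈ leftAugIdeal B ρ := by
  have := map_lA_eq_zero_of_dividesBA h (ρ : A →* K) (augmentRight B ρ) (augmentRight_rA B ρ) hb.1
    hb.2 (toC2 _ (c ⊗ₜ 1))
  rwa [lA_toC2_tmul, augmentRight_toC2_tmul, map_one, one_smul,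
    Submodule.Quotient.mk_eq_zero] at this

end Augmentation

/-- Let `A` be a `K`-algebra with augmentations `ρ 1, …, ρ n : A → K`
and `B ⊆ A` a subalgebra; write `B_i^+ = ker (ρ i) ∩ B`.  If `B ⊆ A` has right depth 2
(`A ⊗_B A ∼ A` as `A`-`B`-bimodules), then `A·B_i^+ ⊆ B_i^+·A` for each `i`; if it has
left depth 2 (`A ⊗_B A ∼ A` as `B`-`A`-bimodules), then `B_i^+·A ⊆ A·B_i^+` for each `i`.
Here `A·B_i^+` is the left ideal (the `A`-span) and `B_i^+·A` the right ideal
(the `Aᵐᵒᵖ`-span) generated by `B_i^+`. -/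
theorem depth_two_augmentation_ideals
    (K : Type u) [Field K] (A : Type u) [Ring A] [Algebra K A] (B : Subalgebra K A)
    (n : ℕ) (ρ : Fin n → (A →ₐ[K] K)) :
    (HequivAB B.toSubring 1 0 →
      ∀ i : Fin n,
        ((Submodule.span A {x : A | x ∈ B ∧ ρ i x = 0} : Submodule A A) : Set A) ⊆
        ((Submodule.span Aᵐᵒᵖ {x : A | x ∈ B ∧ ρ i x = 0} : Submodule Aᵐᵒᵖ A) : Set A)) ∧
    (HequivBA B.toSubring 1 0 →
      ∀ i : Fin n,
        ((Submodule.span Aᵐᵒᵖ {x : A | x ∈ B ∧ ρ i x = 0} : Submodule Aᵐᵒᵖ A) : Set A) ⊆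
        ((Submodule.span A {x : A | x ∈ B ∧ ρ i x = 0} : Submodule A A) : Set A)) :=
  ⟨fun h _ => span_subset_span_op_of_mul_mem fun c _ hb =>
      mul_mem_rightAugIdeal_of_dividesAB h.1 c hb,
    fun h _ => span_op_subset_span_of_mul_mem fun c _ hb =>
      mul_mem_leftAugIdeal_of_dividesBA h.1 c hb⟩
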